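/- arXiv:2204.11100 — 6 statements merged into one kernel-verified Lean document; each statement's English description precedes it below -/
import Mathlib

section
/- Let G be a finite simple graph on n vertices, let s ≥ 1, let p_1, ..., p_s ≥ 0 be integers, and set P = s + p_1 + ⋯ + p_s. Suppose G has a vertex ordering v_1, ..., v_n such that every vertex v_i has fewer than P neighbors among {v_1, ..., v_{i-1}}. Then the vertex set of G can be partitioned into sets A_1, ..., A_s such that for each k ∈ {1, ..., s}, every vertex v_i ∈ A_k has at most p_k neighbors in A_k ∩ {v_1, ..., v_{i-1}}; in particular each induced subgraph G[A_k] is p_k-degenerate. -/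
lemma exists_greedy_coloring {n s : ℕ} (hs : 1 ≤ s) (p : Fin s → ℕ)
    (adj : Fin n → Fin n → Prop) [DecidableRel adj]
    (h : ∀ i, (Finset.univ.filter (fun j => j < i ∧ adj i j)).card < s + ∑ k, p k) :
    ∃ c : Fin n → Fin s, ∀ i,
      (Finset.univ.filter (fun j => j < i ∧ c j = c i ∧ adj i j)).card ≤ p (c i) := by
  haveI : Nonempty (Fin s) := ⟨⟨0, hs⟩⟩
  suffices H : ∀ m : ℕ, m ≤ n → ∃ c : Fin n → Fin s, ∀ i : Fin n, (i : ℕ) < m →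
      (Finset.univ.filter (fun j => j < i ∧ c j = c i ∧ adj i j)).card ≤ p (c i) by
    obtain ⟨c, hc⟩ := H n le_rfl
    exact ⟨c, fun i => hc i i.isLt⟩
  intro m
  induction m with
  | zero => exact fun _ => ⟨Classical.arbitrary _, fun i hi => absurd hi (by omega)⟩
  | succ m ih =>
    intro hm
    obtain ⟨c, hc⟩ := ih (by omega)
    have hmn : m < n := hm
    set im : Fin n := ⟨m, hmn⟩ with him
    -- choose a good color k for vertex im
    have hgood : ∃ k : Fin s,
        (Finset.univ.filter (fun j => j < im ∧ c j = k ∧ adj im j)).card ≤ p k := by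
      by_contra hk
      push_neg at hk
      set N := Finset.univ.filter (fun j => j < im ∧ adj im j) with hN
      have hfib : ∀ k : Fin s,
          Finset.univ.filter (fun j => j < im ∧ c j = k ∧ adj im j)
            = N.filter (fun j => c j = k) := by
        intro k
        ext j
        simp [hN, Finset.mem_filter]
        tauto
      have hsum : ∑ k : Fin s, (N.filter (fun j => c j = k)).card = N.card :=
        (Finset.card_eq_sum_card_fiberwise (fun j _ => Finset.mem_univ (c j))).symm
      have : s + ∑ k, p k ≤ N.card := by
        calc s + ∑ k, p k = ∑ k : Fin s, (p k + 1) := by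
              rw [Finset.sum_add_distrib]; simp [add_comm]
          _ ≤ ∑ k : Fin s, (N.filter (fun j => c j = k)).card := by
              apply Finset.sum_le_sum
              intro k _
              have := hk k
              rw [hfib k] at this
              omega
          _ = N.card := hsum
      have h2 := h im
      rw [hN] at this
      omega
    obtain ⟨k, hkgood⟩ := hgood
    refine ⟨Function.update c im k, fun i hi => ?_⟩
    rcases lt_or_eq_of_le (Nat.lt_succ_iff.mp hi) with hlt | heq
    · have hne : i ≠ im := by
        intro hh; rw [hh] at hlt; simp [him] at hlt
      have hupd_i : Function.update c im k i = c i := Function.update_of_ne hne _ _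
      have hset : Finset.univ.filter
            (fun j => j < i ∧ Function.update c im k j = Function.update c im k i ∧ adj i j)
          = Finset.univ.filter (fun j => j < i ∧ c j = c i ∧ adj i j) := by
        apply Finset.filter_congr
        intro j _
        constructor
        · rintro ⟨hji, hcj, ha⟩
          have hjne : j ≠ im := by
            intro hh
            have : (j : ℕ) < i := hji
            rw [hh] at this; simp [him] at this; omega
          rw [Function.update_of_ne hjne, hupd_i] at hcj
          exact ⟨hji, hcj, ha⟩
        · rintro ⟨hji, hcj, ha⟩
          have hjne : j ≠ im := by
            intro hh
            have : (j : ℕ) < i := hji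
            rw [hh] at this; simp [him] at this; omega
          rw [Function.update_of_ne hjne, hupd_i]
          exact ⟨hji, hcj, ha⟩
      rw [hset, hupd_i]
      exact hc i hlt
    · have hie : i = im := Fin.ext heq
      rw [hie]
      have hupd_i : Function.update c im k im = k := Function.update_self _ _ _
      have hset : Finset.univ.filter
            (fun j => j < im ∧ Function.update c im k j = Function.update c im k im ∧ adj im j)
          = Finset.univ.filter (fun j => j < im ∧ c j = k ∧ adj im j) := by
        apply Finset.filter_congr
        intro j _
        have key : ∀ _ : j < im, Function.update c im k j = c j := fun hji =>
          Function.update_of_ne (fun hh => absurd hji (by rw [hh]; exact lt_irrefl _)) _ _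
        constructor
        · rintro ⟨hji, hcj, ha⟩
          rw [key hji, hupd_i] at hcj
          exact ⟨hji, hcj, ha⟩
        · rintro ⟨hji, hcj, ha⟩
          rw [key hji, hupd_i]
          exact ⟨hji, hcj, ha⟩
      rw [hset, hupd_i]
      exact hkgood

/-- `G[A]` is `d`-degenerate: every non-empty `B ⊆ A` contains a vertex having at
most `d` neighbors inside `B`. -/
def DegenerateOn {V : Type*} [DecidableEq V] (G : SimpleGraph V) [DecidableRel G.Adj]
    (A : Finset V) (d : ℕ) : Prop :=
  ∀ B : Finset V, B ⊆ A → B.Nonempty → ∃ v ∈ B, (B.filter (fun u => G.Adj v u)).card ≤ d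

/-- **Greedy partitioning lemma.**  Let `G` be a finite graph, `s ≥ 1`,
`p 1, …, p s ≥ 0` and `P = s + ∑ p k`.  If `G` has a vertex ordering in which every
vertex has fewer than `P` earlier neighbors, then `V(G)` can be partitioned into
sets `A 1, …, A s` so that each vertex of `A k` has at most `p k` earlier neighbors
inside `A k`; in particular each `G[A k]` is `p k`-degenerate. -/
theorem greedy_partitioning {V : Type*} [Fintype V] [DecidableEq V]
    (G : SimpleGraph V) [DecidableRel G.Adj]
    (s : ℕ) (hs : 1 ≤ s) (p : Fin s → ℕ)
    (e : Fin (Fintype.card V) ≃ V)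
    (h : ∀ i, (Finset.univ.filter (fun j => j < i ∧ G.Adj (e i) (e j))).card
            < s + ∑ k, p k) :
    ∃ A : Fin s → Finset V,
      (∀ v : V, ∃! k, v ∈ A k) ∧
      (∀ k, ∀ i, e i ∈ A k →
        (Finset.univ.filter (fun j => j < i ∧ e j ∈ A k ∧ G.Adj (e i) (e j))).card ≤ p k) ∧
      (∀ k, DegenerateOn G (A k) (p k)) := by
  obtain ⟨c, hc⟩ := exists_greedy_coloring hs p (fun i j => G.Adj (e i) (e j)) h
  set A : Fin s → Finset V := fun k => Finset.univ.filter (fun v => c (e.symm v) = k) with hA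
  have hmem : ∀ v k, v ∈ A k ↔ c (e.symm v) = k := by
    intro v k; simp [hA]
  have hkey : ∀ k, ∀ i, e i ∈ A k →
      (Finset.univ.filter (fun j => j < i ∧ e j ∈ A k ∧ G.Adj (e i) (e j))).card ≤ p k := by
    intro k i hik
    have hci : c i = k := by simpa using (hmem (e i) k).mp hik
    have hset : Finset.univ.filter (fun j => j < i ∧ e j ∈ A k ∧ G.Adj (e i) (e j))
        = Finset.univ.filter (fun j => j < i ∧ c j = c i ∧ G.Adj (e i) (e j)) := by
      apply Finset.filter_congr
      intro j _
      simp [hmem, hci]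
    rw [hset]
    simpa [hci] using hc i
  refine ⟨A, ?_, hkey, ?_⟩
  · intro v
    exact ⟨c (e.symm v), (hmem v _).mpr rfl, fun k hk => ((hmem v k).mp hk).symm⟩
  · intro k B hBA hBne
    have hBne' : (B.image e.symm).Nonempty := hBne.image _
    set i := (B.image e.symm).max' hBne' with hi
    have hiB : i ∈ B.image e.symm := (B.image e.symm).max'_mem hBne'
    obtain ⟨v, hvB, hvi⟩ := Finset.mem_image.mp hiB
    have hv : v = e i := by rw [← hvi]; simp
    refine ⟨v, hvB, ?_⟩
    have hcard : (B.filter (fun u => G.Adj v u)).card ≤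
        (Finset.univ.filter (fun j => j < i ∧ e j ∈ A k ∧ G.Adj (e i) (e j))).card := by
      apply Finset.card_le_card_of_injOn (fun u => e.symm u)
      · intro u hu
        obtain ⟨huB, hadj⟩ := Finset.mem_filter.mp hu
        have h1 : e.symm u ∈ B.image e.symm := Finset.mem_image_of_mem _ huB
        have h2 : e.symm u ≤ i := (B.image e.symm).le_max' _ h1
        have h3 : e.symm u ≠ i := by
          intro hh
          have : u = v := by
            apply e.symm.injective; rw [hh, hvi]
          rw [this] at hadj
          exact G.irrefl hadj
        simp only [Finset.mem_coe, Finset.mem_filter, Finset.mem_univ, true_and]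
        refine ⟨lt_of_le_of_ne h2 h3, ?_, ?_⟩
        · simpa using hBA huB
        · rw [← hv]; simpa using hadj
      · intro a _ b _ hab
        exact e.symm.injective hab
    exact le_trans hcard (hkey k i (hv ▸ hBA hvB))
end

section
/- Let G be a finite simple graph (not necessarily connected) with maximum degree Δ, let s ≥ 1, and let p_1, ..., p_s ≥ 0 be integers such that Δ < s + p_1 + ⋯ + p_s. Then the vertex set of G can be partitioned into sets A_1, ..., A_s such that for each i ∈ {1, ..., s} the induced subgraph G[A_i] is p_i-degenerate. -/
open Finset

/-- Number of neighbors of `v` whose class under `f` is `j`. -/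
private def nbc {V : Type*} [Fintype V] [DecidableEq V] (G : SimpleGraph V)
    [DecidableRel G.Adj] {s : ℕ} (f : V → Fin s) (v : V) (j : Fin s) : ℕ :=
  (Finset.univ.filter fun u => G.Adj v u ∧ f u = j).card

/-- The potential function. -/
private def Phi {V : Type*} [Fintype V] [DecidableEq V] (G : SimpleGraph V)
    [DecidableRel G.Adj] {s : ℕ} (p : Fin s → ℕ) (f : V → Fin s) : ℤ :=
  (∑ v, ∑ u, if G.Adj v u ∧ f u = f v then (1:ℤ) else 0) - 2 * ∑ v, (p (f v) : ℤ)

private lemma nbc_eq_sum_erase {V : Type*} [Fintype V] [DecidableEq V] (G : SimpleGraph V)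
    [DecidableRel G.Adj] {s : ℕ} (f : V → Fin s) (v : V) (j : Fin s) :
    ((nbc G f v j : ℤ)) = ∑ u ∈ Finset.univ.erase v,
      (if G.Adj v u ∧ f u = j then (1:ℤ) else 0) := by
  rw [nbc, Finset.card_filter]
  push_cast
  rw [← Finset.add_sum_erase _ _ (Finset.mem_univ v)]
  simp

private lemma nbc_eq_sum_erase' {V : Type*} [Fintype V] [DecidableEq V] (G : SimpleGraph V)
    [DecidableRel G.Adj] {s : ℕ} (f : V → Fin s) (v : V) (j : Fin s) :
    ((nbc G f v j : ℤ)) = ∑ u ∈ Finset.univ.erase v,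
      (if G.Adj u v ∧ j = f u then (1:ℤ) else 0) := by
  rw [nbc_eq_sum_erase]
  refine Finset.sum_congr rfl fun u _ => ?_
  simp [G.adj_comm, eq_comm]

private lemma exchange {V : Type*} [Fintype V] [DecidableEq V] (G : SimpleGraph V)
    [DecidableRel G.Adj] {s : ℕ} (p : Fin s → ℕ) (f : V → Fin s) (v : V) (i : Fin s) :
    Phi G p (Function.update f v i)
      = Phi G p f + 2 * ((nbc G f v i : ℤ) - (nbc G f v (f v) : ℤ))
          + 2 * ((p (f v) : ℤ) - (p i : ℤ)) := by
  set g := Function.update f v i with hg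
  have hgv : g v = i := Function.update_self v i f
  have hgu : ∀ u, u ≠ v → g u = f u := fun u hu => Function.update_of_ne hu i f
  -- the p-part
  have hP : (∑ u, (p (g u) : ℤ)) = (∑ u, (p (f u) : ℤ)) + (p i : ℤ) - (p (f v) : ℤ) := by
    rw [← Finset.add_sum_erase _ (fun u => (p (g u) : ℤ)) (Finset.mem_univ v),
        ← Finset.add_sum_erase _ (fun u => (p (f u) : ℤ)) (Finset.mem_univ v)]
    have : ∑ u ∈ Finset.univ.erase v, (p (g u) : ℤ)
        = ∑ u ∈ Finset.univ.erase v, (p (f u) : ℤ) := by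
      refine Finset.sum_congr rfl fun u hu => ?_
      rw [hgu u (Finset.ne_of_mem_erase hu)]
    rw [this, hgv]
    ring
  -- the T-part
  have hT : (∑ v', ∑ u, if G.Adj v' u ∧ g u = g v' then (1:ℤ) else 0)
      = (∑ v', ∑ u, if G.Adj v' u ∧ f u = f v' then (1:ℤ) else 0)
        + 2 * ((nbc G f v i : ℤ) - (nbc G f v (f v) : ℤ)) := by
    have hrow : ∀ h : V → Fin s, ∀ v' : V,
        (∑ u, if G.Adj v' u ∧ h u = h v' then (1:ℤ) else 0)
          = (if G.Adj v' v ∧ h v = h v' then (1:ℤ) else 0)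
            + ∑ u ∈ Finset.univ.erase v, (if G.Adj v' u ∧ h u = h v' then (1:ℤ) else 0) :=
      fun h v' => (Finset.add_sum_erase _ _ (Finset.mem_univ v)).symm
    rw [← Finset.add_sum_erase _ (fun v' => ∑ u, if G.Adj v' u ∧ g u = g v' then (1:ℤ) else 0)
          (Finset.mem_univ v),
        ← Finset.add_sum_erase _ (fun v' => ∑ u, if G.Adj v' u ∧ f u = f v' then (1:ℤ) else 0)
          (Finset.mem_univ v)]
    -- row of v for g
    have hrowgv : (∑ u, if G.Adj v u ∧ g u = g v then (1:ℤ) else 0) = (nbc G f v i : ℤ) := by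
      rw [hrow g v, nbc_eq_sum_erase]
      have h0 : (if G.Adj v v ∧ g v = g v then (1:ℤ) else 0) = 0 := by simp
      rw [h0, zero_add]
      refine Finset.sum_congr rfl fun u hu => ?_
      rw [hgu u (Finset.ne_of_mem_erase hu), hgv]
    -- row of v for f
    have hrowfv : (∑ u, if G.Adj v u ∧ f u = f v then (1:ℤ) else 0)
        = (nbc G f v (f v) : ℤ) := by
      rw [hrow f v, nbc_eq_sum_erase]
      simp
    -- rows of v' ≠ v
    have hrows : ∑ v' ∈ Finset.univ.erase v,
          (∑ u, if G.Adj v' u ∧ g u = g v' then (1:ℤ) else 0)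
        = ∑ v' ∈ Finset.univ.erase v,
            ((∑ u, if G.Adj v' u ∧ f u = f v' then (1:ℤ) else 0)
              + (if G.Adj v' v ∧ i = f v' then (1:ℤ) else 0)
              - (if G.Adj v' v ∧ f v = f v' then (1:ℤ) else 0)) := by
      refine Finset.sum_congr rfl fun v' hv' => ?_
      have hv'ne : v' ≠ v := Finset.ne_of_mem_erase hv'
      rw [hrow g v', hrow f v']
      have htail : ∑ u ∈ Finset.univ.erase v, (if G.Adj v' u ∧ g u = g v' then (1:ℤ) else 0)
          = ∑ u ∈ Finset.univ.erase v, (if G.Adj v' u ∧ f u = f v' then (1:ℤ) else 0) := by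
        refine Finset.sum_congr rfl fun u hu => ?_
        rw [hgu u (Finset.ne_of_mem_erase hu), hgu v' hv'ne]
      rw [htail, hgu v' hv'ne, hgv]
      ring
    rw [hrowgv, hrowfv, hrows, Finset.sum_sub_distrib, Finset.sum_add_distrib,
        ← nbc_eq_sum_erase' G f v i, ← nbc_eq_sum_erase' G f v (f v)]
    ring
  rw [Phi, Phi, hT, hP]
  ring

/-- If `G` is a finite (not necessarily connected) graph with maximum degree
`Δ < s + p 1 + ⋯ + p s`, then `V(G)` can be partitioned into sets `A 1, …, A s`
such that each `G[A i]` is `p i`-degenerate. -/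
theorem partition_of_maxDegree_lt {V : Type*} [Fintype V] [DecidableEq V]
    (G : SimpleGraph V) [DecidableRel G.Adj]
    (s : ℕ) (hs : 1 ≤ s) (p : Fin s → ℕ)
    (hΔ : G.maxDegree < s + ∑ i, p i) :
    ∃ A : Fin s → Finset V,
      (∀ v : V, ∃! i, v ∈ A i) ∧
      (∀ i, DegenerateOn G (A i) (p i)) := by
  haveI : Nonempty (Fin s) := ⟨⟨0, hs⟩⟩
  obtain ⟨f, -, hmin⟩ := Finset.exists_min_image (Finset.univ : Finset (V → Fin s))
    (Phi G p) Finset.univ_nonempty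
  -- key claim: every vertex has few same-class neighbors
  have key : ∀ v : V, nbc G f v (f v) ≤ p (f v) := by
    intro v
    by_contra hcon
    push_neg at hcon
    -- the class sizes sum to the degree
    have hdeg : ∑ j, nbc G f v j = G.degree v := by
      rw [SimpleGraph.degree, SimpleGraph.neighborFinset_eq_filter,
        Finset.card_eq_sum_card_fiberwise (f := f) (t := Finset.univ)
          (fun u _ => Finset.mem_univ (f u))]
      refine Finset.sum_congr rfl fun j _ => ?_
      rw [nbc, Finset.filter_filter]
    -- pigeonhole: some class is not full
    have hex : ∃ i, nbc G f v i ≤ p i := by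
      by_contra hc
      push_neg at hc
      have h1 : ∑ j, (p j + 1) ≤ ∑ j, nbc G f v j :=
        Finset.sum_le_sum fun j _ => hc j
      have h2 : ∑ j, (p j + 1) = (∑ j, p j) + s := by
        rw [Finset.sum_add_distrib]
        simp [Finset.card_univ]
      have h3 : G.degree v ≤ G.maxDegree := G.degree_le_maxDegree v
      omega
    obtain ⟨i, hi⟩ := hex
    have hine : i ≠ f v := by
      intro h; rw [h] at hi; omega
    have hlt := exchange G p f v i
    have := hmin (Function.update f v i) (Finset.mem_univ _)
    have hc1 : (nbc G f v i : ℤ) ≤ (p i : ℤ) := by exact_mod_cast hi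
    have hc2 : (p (f v) : ℤ) < (nbc G f v (f v) : ℤ) := by exact_mod_cast hcon
    omega
  refine ⟨fun i => Finset.univ.filter (fun v => f v = i), fun v => ?_, fun i => ?_⟩
  · exact ⟨f v, by simp, fun j hj => by simpa using (Finset.mem_filter.mp hj).2.symm⟩
  · intro B hB hBne
    obtain ⟨v, hv⟩ := hBne
    refine ⟨v, hv, ?_⟩
    have hfv : f v = i := (Finset.mem_filter.mp (hB hv)).2
    have hsub : B.filter (fun u => G.Adj v u)
        ⊆ Finset.univ.filter (fun u => G.Adj v u ∧ f u = f v) := by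
      intro u hu
      rw [Finset.mem_filter] at hu ⊢
      exact ⟨Finset.mem_univ u, hu.2, by rw [hfv]; exact (Finset.mem_filter.mp (hB hu.1)).2⟩
    calc (B.filter (fun u => G.Adj v u)).card ≤ nbc G f v (f v) := Finset.card_le_card hsub
      _ ≤ p (f v) := key v
      _ = p i := by rw [hfv]
end

section
/- Let G be a finite simple graph, let s ≥ 1, let p_1, ..., p_s ≥ 0 be integers, and set P = s + p_1 + ⋯ + p_s. If G is (P−1)-degenerate, then the vertex set of G can be partitioned into sets A_1, ..., A_s such that for each i ∈ {1, ..., s} the induced subgraph G[A_i] is p_i-degenerate. -/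
/-- `G` is `d`-degenerate: every non-empty subgraph of `G` contains a vertex of
degree at most `d`. -/
def Degenerate {V : Type*} [Fintype V] [DecidableEq V] (G : SimpleGraph V)
    [DecidableRel G.Adj] (d : ℕ) : Prop :=
  DegenerateOn G Finset.univ d

lemma degenerateOn_mono {V : Type*} [DecidableEq V] (G : SimpleGraph V) [DecidableRel G.Adj]
    {A A' : Finset V} {d : ℕ} (h : DegenerateOn G A d) (hsub : A' ⊆ A) :
    DegenerateOn G A' d :=
  fun B hB hne => h B (hB.trans hsub) hne

lemma partition_aux {V : Type*} [Fintype V] [DecidableEq V]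
    (G : SimpleGraph V) [DecidableRel G.Adj]
    (s : ℕ) (hs : 1 ≤ s) (p : Fin s → ℕ) :
    ∀ (n : ℕ) (S : Finset V), S.card ≤ n → DegenerateOn G S (s + ∑ i, p i - 1) →
      ∃ A : Fin s → Finset V, (∀ i, A i ⊆ S) ∧ (∀ v ∈ S, ∃! i, v ∈ A i) ∧
        ∀ i, DegenerateOn G (A i) (p i) := by
  intro n
  induction n with
  | zero =>
    intro S hS _
    have hSe : S = ∅ := Finset.card_eq_zero.mp (Nat.le_zero.mp hS)
    subst hSe
    refine ⟨fun _ => ∅, fun i => Finset.Subset.refl _, by simp, ?_⟩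
    intro i B hB hne
    exact (hne.ne_empty (Finset.subset_empty.mp hB)).elim
  | succ n ih =>
    intro S hS hdeg
    rcases S.eq_empty_or_nonempty with rfl | hne
    · exact ih ∅ (by simp) hdeg
    obtain ⟨v, hvS, hvdeg⟩ := hdeg S (Finset.Subset.refl _) hne
    set S' := S.erase v with hS'def
    have hS'sub : S' ⊆ S := Finset.erase_subset _ _
    have hS'card : S'.card ≤ n := by
      have h1 : S'.card = S.card - 1 := Finset.card_erase_of_mem hvS
      have h2 : 1 ≤ S.card := Finset.card_pos.mpr hne
      omega
    obtain ⟨A, hsub, huniq, hdegA⟩ := ih S' hS'card (degenerateOn_mono G hdeg hS'sub)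
    -- pigeonhole: some part has few neighbors of v
    have key : ∃ i, ((A i).filter (fun u => G.Adj v u)).card ≤ p i := by
      by_contra hcon
      push_neg at hcon
      set f : Fin s → Finset V := fun i => (A i).filter (fun u => G.Adj v u) with hf
      have hdisj : ∀ i ∈ (Finset.univ : Finset (Fin s)), ∀ j ∈ Finset.univ, i ≠ j →
          Disjoint (f i) (f j) := by
        intro i _ j _ hij
        rw [Finset.disjoint_left]
        intro w hwi hwj
        have hwAi : w ∈ A i := Finset.mem_filter.mp hwi |>.1
        have hwAj : w ∈ A j := Finset.mem_filter.mp hwj |>.1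
        obtain ⟨k, _, hk⟩ := huniq w (hsub i hwAi)
        exact hij ((hk i hwAi).trans (hk j hwAj).symm)
      have hbsub : (Finset.univ.biUnion f) ⊆ S.filter (fun u => G.Adj v u) := by
        intro w hw
        obtain ⟨i, _, hwi⟩ := Finset.mem_biUnion.mp hw
        have := Finset.mem_filter.mp hwi
        exact Finset.mem_filter.mpr ⟨hS'sub (hsub i this.1), this.2⟩
      have hsum : ∑ i, (f i).card = (Finset.univ.biUnion f).card :=
        (Finset.card_biUnion hdisj).symm
      have h1 : ∑ i, (p i + 1) ≤ ∑ i, (f i).card :=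
        Finset.sum_le_sum (fun i _ => hcon i)
      have h2 : (Finset.univ.biUnion f).card ≤ (S.filter (fun u => G.Adj v u)).card :=
        Finset.card_le_card hbsub
      have h3 : ∑ i, (p i + 1) = ∑ i, p i + s := by
        rw [Finset.sum_add_distrib]
        simp [Finset.card_univ]
      omega
    obtain ⟨i, hi⟩ := key
    refine ⟨Function.update A i (insert v (A i)), ?_, ?_, ?_⟩
    · intro j
      by_cases hj : j = i
      · subst hj
        simp only [Function.update_self]
        exact Finset.insert_subset hvS ((hsub j).trans hS'sub)
      · simp only [Function.update_of_ne hj]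
        exact (hsub j).trans hS'sub
    · intro w hw
      by_cases hwv : w = v
      · subst hwv
        refine ⟨i, by simp only [Function.update_self]; exact Finset.mem_insert_self _ _, ?_⟩
        intro j hj
        by_contra hji
        simp only [Function.update_of_ne hji] at hj
        exact (Finset.notMem_erase w S) (hsub j hj)
      · have hwS' : w ∈ S' := Finset.mem_erase.mpr ⟨hwv, hw⟩
        obtain ⟨j, hwj, hj⟩ := huniq w hwS'
        refine ⟨j, ?_, ?_⟩
        · by_cases hji : j = i
          · subst hji
            simp only [Function.update_self]
            exact Finset.mem_insert_of_mem hwj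
          · simp only [Function.update_of_ne hji]; exact hwj
        · intro k hk
          by_cases hki : k = i
          · subst hki
            simp only [Function.update_self] at hk
            rcases Finset.mem_insert.mp hk with h | h
            · exact absurd h hwv
            · exact hj k h
          · simp only [Function.update_of_ne hki] at hk
            exact hj k hk
    · intro j
      by_cases hj : j = i
      · subst hj
        simp only [Function.update_self]
        intro B hB hBne
        by_cases hvB : v ∈ B
        · refine ⟨v, hvB, ?_⟩
          refine le_trans (Finset.card_le_card ?_) hi
          intro u hu
          have ⟨huB, hadj⟩ := Finset.mem_filter.mp hu
          rcases Finset.mem_insert.mp (hB huB) with h | h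
          · exact absurd (h ▸ hadj) (G.irrefl)
          · exact Finset.mem_filter.mpr ⟨h, hadj⟩
        · exact hdegA j B (fun u hu => ((Finset.mem_insert.mp (hB hu)).resolve_left
            (fun h => hvB (h ▸ hu)))) hBne
      · simp only [Function.update_of_ne hj]
        exact hdegA j

/-- If `G` is `(P - 1)`-degenerate where `P = s + p 1 + ⋯ + p s` with `s ≥ 1`, then
`V(G)` can be partitioned into sets `A 1, …, A s` such that each `G[A i]` is
`p i`-degenerate. -/
theorem partition_of_degenerate {V : Type*} [Fintype V] [DecidableEq V]
    (G : SimpleGraph V) [DecidableRel G.Adj]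
    (s : ℕ) (hs : 1 ≤ s) (p : Fin s → ℕ)
    (hdeg : Degenerate G (s + ∑ i, p i - 1)) :
    ∃ A : Fin s → Finset V,
      (∀ v : V, ∃! i, v ∈ A i) ∧
      (∀ i, DegenerateOn G (A i) (p i)) := by
  obtain ⟨A, _, huniq, hdegA⟩ :=
    partition_aux G s hs p (Finset.univ : Finset V).card Finset.univ le_rfl hdeg
  exact ⟨A, fun v => huniq v (Finset.mem_univ v), hdegA⟩
end

section
/- Let G be a finite connected simple graph with maximum degree Δ that is not Δ-regular (i.e., G contains a vertex of degree strictly less than Δ), let s ≥ 1, and let p_1, ..., p_s ≥ 0 be integers with p_1 + ⋯ + p_s = Δ − s. Then the vertex set of G can be partitioned into sets A_1, ..., A_s such that for each i ∈ {1, ..., s} the induced subgraph G[A_i] is p_i-degenerate. -/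
lemma exists_assignment {V : Type*} [Fintype V] [DecidableEq V] (G : SimpleGraph V)
    [DecidableRel G.Adj] (key : V → ℕ) {s : ℕ} (i0 : Fin s) (p : Fin s → ℕ)
    (hkey : ∀ v, ((G.neighborFinset v).filter (fun u => key u < key v)).card < ∑ i, (p i + 1)) :
    ∃ f : V → Fin s, ∀ v,
      ((G.neighborFinset v).filter (fun u => key u < key v ∧ f u = f v)).card ≤ p (f v) := by
  classical
  have pigeon : ∀ (v : V) (g : V → Fin s), ∃ i : Fin s,
      ((G.neighborFinset v).filter (fun u => key u < key v ∧ g u = i)).card ≤ p i := by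
    intro v g
    by_contra hcon
    push_neg at hcon
    have hsum : ∑ i : Fin s, (p i + 1) ≤
        ((G.neighborFinset v).filter (fun u => key u < key v)).card := by
      have hcard := Finset.card_eq_sum_card_fiberwise
        (f := g) (s := (G.neighborFinset v).filter (fun u => key u < key v))
        (t := Finset.univ) (fun x _ => Finset.mem_univ _)
      rw [hcard]
      apply Finset.sum_le_sum
      intro i _
      have : ((G.neighborFinset v).filter (fun u => key u < key v)).filter (fun u => g u = i)
          = (G.neighborFinset v).filter (fun u => key u < key v ∧ g u = i) := by
        rw [Finset.filter_filter]
      rw [this]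
      exact hcon i
    exact absurd (lt_of_le_of_lt hsum (hkey v)) (by omega)
  have wf : WellFounded (fun u v : V => key u < key v) := (measure key).wf
  let F : (v : V) → ((u : V) → key u < key v → Fin s) → Fin s :=
    fun v ih => Classical.choose (pigeon v (fun u => if h : key u < key v then ih u h else i0))
  refine ⟨WellFounded.fix wf F, fun v => ?_⟩
  set f := WellFounded.fix wf F with hf
  have hfv : f v = Classical.choose
      (pigeon v (fun u => if h : key u < key v then f u else i0)) :=
    WellFounded.fix_eq wf F v
  have hspec := Classical.choose_spec (pigeon v (fun u => if h : key u < key v then f u else i0))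
  rw [← hfv] at hspec
  have heq : (G.neighborFinset v).filter (fun u => key u < key v ∧ f u = f v)
      = (G.neighborFinset v).filter
        (fun u => key u < key v ∧ (if h : key u < key v then f u else i0) = f v) := by
    apply Finset.filter_congr
    intro u _
    constructor
    · rintro ⟨h1, h2⟩; exact ⟨h1, by rw [dif_pos h1]; exact h2⟩
    · rintro ⟨h1, h2⟩; rw [dif_pos h1] at h2; exact ⟨h1, h2⟩
  rw [heq]
  exact hspec

/-- Let `G` be a finite connected graph with maximum degree `Δ` that is not
`Δ`-regular, let `s ≥ 1` and let `p 1, …, p s ≥ 0` with `p 1 + ⋯ + p s = Δ - s`.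
Then `V(G)` can be partitioned into sets `A 1, …, A s` such that each `G[A i]` is
`p i`-degenerate. -/
theorem partition_of_not_regular {V : Type*} [Fintype V] [DecidableEq V]
    (G : SimpleGraph V) [DecidableRel G.Adj]
    (hconn : G.Connected)
    (hnreg : ∃ v : V, G.degree v < G.maxDegree)
    (s : ℕ) (hs : 1 ≤ s) (p : Fin s → ℕ)
    (hp : (∑ i, (p i : ℤ)) = (G.maxDegree : ℤ) - (s : ℤ)) :
    ∃ A : Fin s → Finset V,
      (∀ v : V, ∃! i, v ∈ A i) ∧
      (∀ i, DegenerateOn G (A i) (p i)) := by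
  classical
  obtain ⟨r, hr⟩ := hnreg
  set n := Fintype.card V with hn
  have hnpos : 0 < n := Fintype.card_pos_iff.mpr ⟨r⟩
  set e := Fintype.equivFin V with he
  set key : V → ℕ := fun v => (n - G.dist r v) * n + (e v : ℕ) with hkeydef
  have hev : ∀ v : V, (e v : ℕ) < n := fun v => (e v).2
  have keyinj : Function.Injective key := by
    intro u v h
    have h1 : key u % n = key v % n := by rw [h]
    have h2 : ∀ w : V, key w % n = (e w : ℕ) := by
      intro w
      simp only [hkeydef]
      rw [Nat.mul_comm, Nat.mul_add_mod, Nat.mod_eq_of_lt (hev w)]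
    rw [h2 u, h2 v] at h1
    exact e.injective (Fin.ext h1)
  have hdistlt : ∀ v : V, G.dist r v < n := by
    intro v
    obtain ⟨w⟩ := hconn.preconnected r v
    calc G.dist r v ≤ w.toPath.1.length := SimpleGraph.dist_le _
      _ < n := w.toPath.2.length_lt
  have hlater : ∀ v : V, v ≠ r → ∃ u, G.Adj v u ∧ key v < key u := by
    intro v hv
    obtain ⟨w, hw⟩ := (hconn.preconnected r v).exists_walk_length_eq_dist
    have hdpos : 0 < G.dist r v := hconn.pos_dist_of_ne (Ne.symm hv)
    cases hrev : w.reverse with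
    | nil =>
        exfalso
        have : w.length = 0 := by
          have := congrArg SimpleGraph.Walk.length hrev
          rw [SimpleGraph.Walk.length_reverse] at this
          simpa using this
        omega
    | cons hadj q =>
        rename_i u
        refine ⟨u, hadj, ?_⟩
        have hqlen : q.length + 1 = G.dist r v := by
          have := congrArg SimpleGraph.Walk.length hrev
          rw [SimpleGraph.Walk.length_reverse, hw] at this
          simpa using this.symm
        have hdu : G.dist r u < G.dist r v := by
          have h1 : G.dist u r ≤ q.length := SimpleGraph.dist_le q
          rw [SimpleGraph.dist_comm] at h1
          omega
        have hab : (n - G.dist r v) + 1 ≤ n - G.dist r u := by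
          have := hdistlt v
          omega
        calc key v < (n - G.dist r v) * n + n := by
              simp only [hkeydef]; exact Nat.add_lt_add_left (hev v) _
          _ = ((n - G.dist r v) + 1) * n := by ring
          _ ≤ (n - G.dist r u) * n := Nat.mul_le_mul_right n hab
          _ ≤ key u := Nat.le_add_right _ _
  have hΔ : ∑ i : Fin s, (p i + 1) = G.maxDegree := by
    have h1 : (∑ i : Fin s, ((p i : ℤ) + 1)) = (G.maxDegree : ℤ) := by
      rw [Finset.sum_add_distrib, hp]
      simp
    have h2 : ((∑ i : Fin s, (p i + 1) : ℕ) : ℤ) = (G.maxDegree : ℤ) := by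
      push_cast
      exact h1
    exact_mod_cast h2
  have hE : ∀ v, ((G.neighborFinset v).filter (fun u => key u < key v)).card
      < ∑ i : Fin s, (p i + 1) := by
    intro v
    rw [hΔ]
    by_cases hv : v = r
    · subst hv
      calc ((G.neighborFinset v).filter (fun u => key u < key v)).card
          ≤ (G.neighborFinset v).card := Finset.card_le_card (Finset.filter_subset _ _)
        _ = G.degree v := (G.card_neighborFinset_eq_degree v)
        _ < G.maxDegree := hr
    · obtain ⟨u, hadj, hku⟩ := hlater v hv
      have hss : (G.neighborFinset v).filter (fun u => key u < key v) ⊂ G.neighborFinset v := by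
        refine Finset.ssubset_iff_of_subset (Finset.filter_subset _ _) |>.mpr ⟨u, ?_, ?_⟩
        · exact (SimpleGraph.mem_neighborFinset G v u).mpr hadj
        · intro hmem
          have := (Finset.mem_filter.mp hmem).2
          omega
      calc ((G.neighborFinset v).filter (fun u => key u < key v)).card
          < (G.neighborFinset v).card := Finset.card_lt_card hss
        _ = G.degree v := (G.card_neighborFinset_eq_degree v)
        _ ≤ G.maxDegree := G.degree_le_maxDegree v
  obtain ⟨f, hf⟩ := exists_assignment G key ⟨0, hs⟩ p hE
  refine ⟨fun i => Finset.univ.filter (fun v => f v = i), ?_, ?_⟩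
  · intro v
    refine ⟨f v, by simp, ?_⟩
    intro j hj
    simp only [Finset.mem_filter] at hj
    exact hj.2.symm
  · intro i B hBsub hBne
    obtain ⟨v, hvB, hvmax⟩ := Finset.exists_max_image B key hBne
    refine ⟨v, hvB, ?_⟩
    have hfv : f v = i := by
      have := hBsub hvB
      simp only [Finset.mem_filter] at this
      exact this.2
    have hsub : B.filter (fun u => G.Adj v u)
        ⊆ (G.neighborFinset v).filter (fun u => key u < key v ∧ f u = f v) := by
      intro u hu
      rw [Finset.mem_filter] at hu
      obtain ⟨huB, hadj⟩ := hu
      rw [Finset.mem_filter]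
      refine ⟨(SimpleGraph.mem_neighborFinset G v u).mpr hadj, ?_, ?_⟩
      · have hle : key u ≤ key v := hvmax u huB
        have hne : key u ≠ key v := fun h => (G.ne_of_adj hadj) (keyinj h).symm
        omega
      · have := hBsub huB
        simp only [Finset.mem_filter] at this
        rw [this.2, hfv]
    calc (B.filter (fun u => G.Adj v u)).card
        ≤ ((G.neighborFinset v).filter (fun u => key u < key v ∧ f u = f v)).card :=
          Finset.card_le_card hsub
      _ ≤ p (f v) := hf v
      _ = p i := by rw [hfv]
end

section
/- Let Δ ≥ 3 and let G be a finite connected Δ-regular simple graph. Suppose there exist a vertex z of G and a set X ⊆ N(z) with |X| = Δ − 1 such that the induced subgraph G[X] is not complete and the graph G − X obtained by deleting the vertices of X is connected. Then for all non-negative integers p_A ≤ p_B with p_A + p_B = Δ − 2, the vertex set of G can be partitioned into sets A and B such that G[A] is p_A-degenerate and G[B] is p_B-degenerate. -/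
section GreedyMachinery

open Finset

lemma card_attach_filter {α : Type*} (s : Finset α) (p : α → Prop) [DecidablePred p] :
    (s.attach.filter fun a => p a.1).card = (s.filter p).card := by
  apply Finset.card_bij (fun a _ => a.1)
  · intro a ha
    simp only [mem_filter, mem_attach, true_and] at ha ⊢
    exact ⟨a.2, ha⟩
  · intro a _ b _ h; exact Subtype.ext h
  · intro b hb
    simp only [mem_filter] at hb
    exact ⟨⟨b, hb.1⟩, by simp [hb.2], rfl⟩

lemma mod_trick {m a b r s : ℕ} (hr : r < m) (hs : s < m)
    (h : a * m + r = b * m + s) : r = s := by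
  rcases lt_trichotomy a b with hab | hab | hab
  · exfalso
    have h1 : (a + 1) * m ≤ b * m := mul_le_mul_left (by omega) m
    have h2 : (a + 1) * m = a * m + m := by ring
    omega
  · subst hab; omega
  · exfalso
    have h1 : (b + 1) * m ≤ a * m := mul_le_mul_left (by omega) m
    have h2 : (b + 1) * m = b * m + m := by ring
    omega

lemma exists_adj_dist_lt {W : Type*} (H : SimpleGraph W) (hc : H.Connected) (a b : W)
    (hne : a ≠ b) : ∃ c, H.Adj a c ∧ H.dist c b < H.dist a b := by
  have hpos := hc.pos_dist_of_ne hne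
  obtain ⟨p, hp⟩ := hc.exists_walk_length_eq_dist a b
  cases p with
  | nil => simp at hpos
  | cons h q =>
      refine ⟨_, h, ?_⟩
      have hq := SimpleGraph.dist_le q
      simp only [SimpleGraph.Walk.length_cons] at hp
      omega

variable {V : Type*} [Fintype V] [DecidableEq V]

def greedyA (G : SimpleGraph V) [DecidableRel G.Adj] (cap : V → ℕ) (ord : V → ℕ) (v : V) : Bool :=
  decide ((((Finset.univ.filter (fun u => ord u < ord v)).attach.filter
      (fun u => G.Adj v u.1 ∧ greedyA G cap ord u.1 = true)).card ≤ cap v))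
termination_by ord v
decreasing_by
  all_goals
    first
      | (have h2 := u.2; simp only [Finset.mem_filter] at h2; exact h2.2)
      | (have h2 := a.2; simp only [Finset.mem_filter] at h2; exact h2.2)

/-- the set of earlier neighbors of `v` assigned to `A` -/
def eA (G : SimpleGraph V) [DecidableRel G.Adj] (cap : V → ℕ) (ord : V → ℕ) (v : V) : Finset V :=
  Finset.univ.filter (fun u => G.Adj v u ∧ ord u < ord v ∧ greedyA G cap ord u = true)

lemma greedyA_iff (G : SimpleGraph V) [DecidableRel G.Adj] (cap : V → ℕ) (ord : V → ℕ) (v : V) :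
    greedyA G cap ord v = true ↔ (eA G cap ord v).card ≤ cap v := by
  rw [greedyA, decide_eq_true_iff,
    card_attach_filter (Finset.univ.filter (fun u => ord u < ord v))
      (fun u => G.Adj v u ∧ greedyA G cap ord u = true), Finset.filter_filter]
  have he : (Finset.univ.filter fun a => ord a < ord v ∧ (G.Adj v a ∧ greedyA G cap ord a = true))
      = eA G cap ord v := by
    apply Finset.ext; intro a; simp only [eA, Finset.mem_filter]; tauto
  rw [he]

end GreedyMachinery

/-- Let `Δ ≥ 3` and let `G` be a finite connected `Δ`-regular graph admitting a
special neighborhood, i.e. a vertex `z` and a set `X ⊆ N(z)` with `|X| = Δ - 1`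
such that `G[X]` is not complete and `G - X` is connected.  Then for all
non-negative integers `pA ≤ pB` with `pA + pB = Δ - 2`, the vertex set of `G` can
be partitioned into sets `A` and `B` with `G[A]` `pA`-degenerate and `G[B]`
`pB`-degenerate. -/
theorem bipartition_of_special_neighborhood {V : Type*} [Fintype V] [DecidableEq V]
    (G : SimpleGraph V) [DecidableRel G.Adj] (Δ : ℕ) (hΔ : 3 ≤ Δ)
    (hconn : G.Connected) (hreg : G.IsRegularOfDegree Δ)
    (z : V) (X : Finset V)
    (hXN : ∀ x ∈ X, G.Adj z x)
    (hcard : X.card = Δ - 1)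
    (hnc : ∃ x ∈ X, ∃ y ∈ X, x ≠ y ∧ ¬ G.Adj x y)
    (hdel : (G.induce {u : V | u ∉ X}).Connected) :
    ∀ pA pB : ℕ, pA ≤ pB → pA + pB = Δ - 2 →
      ∃ A B : Finset V,
        Disjoint A B ∧ A ∪ B = Finset.univ ∧
        DegenerateOn G A pA ∧ DegenerateOn G B pB := by
  intro pA pB hABle hsum
  obtain ⟨x, hxX, y, hyX, hxy, hnadj⟩ := hnc
  have hΔeq : Δ = pA + pB + 2 := by omega
  have hzX : z ∉ X := fun h => G.irrefl (hXN z h)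
  have hxz : x ≠ z := fun h => hzX (h ▸ hxX)
  have hyz : y ≠ z := fun h => hzX (h ▸ hyX)
  set n := Fintype.card V with hn
  have hnpos : 0 < n := Fintype.card_pos_iff.mpr ⟨z⟩
  set eV := Fintype.equivFin V with heV
  set Xr := (X.erase x).erase y with hXr
  have hyex : y ∈ X.erase x := Finset.mem_erase.mpr ⟨hxy.symm, hyX⟩
  have hXrX : Xr ⊆ X := (Finset.erase_subset _ _).trans (Finset.erase_subset _ _)
  have hXrcard : Xr.card = Δ - 3 := by
    rw [hXr, Finset.card_erase_of_mem hyex, Finset.card_erase_of_mem hxX, hcard]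
    omega
  have hzS : z ∈ {u : V | u ∉ X} := hzX
  set H := G.induce {u : V | u ∉ X} with hH
  set z' : {u : V | u ∉ X} := ⟨z, hzS⟩ with hz'
  set d : V → ℕ := fun v => if h : v ∉ X then H.dist ⟨v, h⟩ z' else 0 with hd
  set D := Finset.univ.sup d with hD
  have hdD : ∀ v, d v ≤ D := fun v => Finset.le_sup (Finset.mem_univ v)
  set ord : V → ℕ := fun v =>
    if v = x then 0
    else if v = y then 1
    else if hv : v ∈ Xr then 2 + (Xr.equivFin ⟨v, hv⟩ : ℕ)
    else if v = z then Δ + (D + 1) * (n + 1) + n + 1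
    else Δ + (D - d v) * (n + 1) + (eV v : ℕ) with hord
  have hordx : ord x = 0 := by simp [hord]
  have hordy : ord y = 1 := by simp [hord, hxy.symm]
  have hzXr : z ∉ Xr := fun h => hzX (hXrX h)
  have hordz : ord z = Δ + (D + 1) * (n + 1) + n + 1 := by
    simp [hord, hxz.symm, hyz.symm, hzXr]
  have hordXr : ∀ v (hv : v ∈ Xr), ord v = 2 + (Xr.equivFin ⟨v, hv⟩ : ℕ) := by
    intro v hv
    have h1 : v ≠ x := (Finset.mem_erase.mp (Finset.mem_erase.mp hv).2).1
    have h2 : v ≠ y := (Finset.mem_erase.mp hv).1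
    simp [hord, h1, h2, hv]
  have hordU : ∀ v, v ∉ X → v ≠ z → ord v = Δ + (D - d v) * (n + 1) + (eV v : ℕ) := by
    intro v hvX hvz
    have h1 : v ≠ x := fun h => hvX (h ▸ hxX)
    have h2 : v ≠ y := fun h => hvX (h ▸ hyX)
    have h3 : v ∉ Xr := fun h => hvX (hXrX h)
    simp [hord, h1, h2, h3, hvz]
  have hordX_lt : ∀ v ∈ X, ord v < Δ - 1 := by
    intro v hv
    by_cases h1 : v = x
    · subst h1; rw [hordx]; omega
    by_cases h2 : v = y
    · subst h2; rw [hordy]; omega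
    have hv' : v ∈ Xr := Finset.mem_erase.mpr ⟨h2, Finset.mem_erase.mpr ⟨h1, hv⟩⟩
    rw [hordXr v hv']
    have h5 : ((Xr.equivFin ⟨v, hv'⟩ : Fin Xr.card) : ℕ) < Xr.card := (Xr.equivFin ⟨v, hv'⟩).2
    omega
  have hordU_ge : ∀ v, v ∉ X → Δ - 1 ≤ ord v := by
    intro v hv
    by_cases hvz : v = z
    · subst hvz; rw [hordz]; omega
    · rw [hordU v hv hvz]; omega
  have hXbefore : ∀ v ∈ X, ∀ u, u ∉ X → ord v < ord u :=
    fun v hv u hu => lt_of_lt_of_le (hordX_lt v hv) (hordU_ge u hu)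
  have hordU_lt_z : ∀ v, v ≠ z → ord v < ord z := by
    intro v hvz
    by_cases hvX : v ∈ X
    · exact lt_of_lt_of_le (hordX_lt v hvX) (hordU_ge z hzX)
    · rw [hordU v hvX hvz, hordz]
      have h1 : (D - d v) * (n + 1) ≤ D * (n + 1) := Nat.mul_le_mul_right _ (Nat.sub_le _ _)
      have h2 : (eV v : ℕ) < n := (eV v).2
      have h3 : D * (n+1) + (n+1) = (D+1) * (n+1) := by ring
      omega
  have hinj : ∀ u v, ord u = ord v → u = v := by
    intro u v h
    by_cases huX : u ∈ X <;> by_cases hvX : v ∈ X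
    · -- both in X
      by_cases hux : u = x <;> by_cases hvx : v = x
      · rw [hux, hvx]
      · exfalso; subst hux
        by_cases hvy : v = y
        · subst hvy; rw [hordx, hordy] at h; omega
        · have hv' : v ∈ Xr := Finset.mem_erase.mpr ⟨hvy, Finset.mem_erase.mpr ⟨hvx, hvX⟩⟩
          rw [hordx, hordXr v hv'] at h; omega
      · exfalso; subst hvx
        by_cases huy : u = y
        · subst huy; rw [hordx, hordy] at h; omega
        · have hu' : u ∈ Xr := Finset.mem_erase.mpr ⟨huy, Finset.mem_erase.mpr ⟨hux, huX⟩⟩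
          rw [hordx, hordXr u hu'] at h; omega
      · by_cases huy : u = y <;> by_cases hvy : v = y
        · rw [huy, hvy]
        · exfalso; subst huy
          have hv' : v ∈ Xr := Finset.mem_erase.mpr ⟨hvy, Finset.mem_erase.mpr ⟨hvx, hvX⟩⟩
          rw [hordy, hordXr v hv'] at h; omega
        · exfalso; subst hvy
          have hu' : u ∈ Xr := Finset.mem_erase.mpr ⟨huy, Finset.mem_erase.mpr ⟨hux, huX⟩⟩
          rw [hordy, hordXr u hu'] at h; omega
        · have hu' : u ∈ Xr := Finset.mem_erase.mpr ⟨huy, Finset.mem_erase.mpr ⟨hux, huX⟩⟩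
          have hv' : v ∈ Xr := Finset.mem_erase.mpr ⟨hvy, Finset.mem_erase.mpr ⟨hvx, hvX⟩⟩
          rw [hordXr u hu', hordXr v hv'] at h
          have : Xr.equivFin ⟨u, hu'⟩ = Xr.equivFin ⟨v, hv'⟩ := by
            apply Fin.ext; omega
          have h6 := Xr.equivFin.injective this
          exact congrArg Subtype.val h6
    · exact absurd h (ne_of_lt (hXbefore u huX v hvX))
    · exact absurd h.symm (ne_of_lt (hXbefore v hvX u huX))
    · -- both outside X
      by_cases huz : u = z <;> by_cases hvz : v = z
      · rw [huz, hvz]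
      · exfalso; subst huz; have := hordU_lt_z v hvz; omega
      · exfalso; subst hvz; have := hordU_lt_z u huz; omega
      · rw [hordU u huX huz, hordU v hvX hvz] at h
        have h2 : (D - d u) * (n+1) + (eV u : ℕ) = (D - d v) * (n+1) + (eV v : ℕ) := by
          set p := (D - d u) * (n+1); set q := (D - d v) * (n+1); omega
        have h3 : (eV u : ℕ) = (eV v : ℕ) := mod_trick (by omega) (by omega) h2
        have : eV u = eV v := Fin.ext h3
        exact eV.injective this
  have hdpos : ∀ u, u ∉ X → u ≠ z → 0 < d u := by
    intro u huX huz
    have hne : (⟨u, huX⟩ : {u : V | u ∉ X}) ≠ z' := by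
      intro hh; exact huz (congrArg Subtype.val hh)
    have := hdel.pos_dist_of_ne hne
    simp only [hd]
    rw [dif_pos huX]
    exact this
  have hlater : ∀ u, u ∉ X → u ≠ z → ∃ t, G.Adj u t ∧ ord u < ord t := by
    intro u huX huz
    have hne : (⟨u, huX⟩ : {u : V | u ∉ X}) ≠ z' := by
      intro hh; exact huz (congrArg Subtype.val hh)
    obtain ⟨c, hadj, hlt⟩ := exists_adj_dist_lt H hdel ⟨u, huX⟩ z' hne
    have hcX : (c : V) ∉ X := c.2
    have hGadj : G.Adj u (c : V) := hadj
    refine ⟨c, hGadj, ?_⟩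
    have hdu : d u = H.dist ⟨u, huX⟩ z' := by simp only [hd]; rw [dif_pos huX]
    have hdc : d (c : V) = H.dist c z' := by
      simp only [hd]; rw [dif_pos hcX]
    have hdlt : d (c : V) < d u := by rw [hdu, hdc]; exact hlt
    by_cases hcz : (c : V) = z
    · rw [hcz]; exact hordU_lt_z u huz
    · rw [hordU u huX huz, hordU (c : V) hcX hcz]
      have h1 : D - d (c:V) ≥ (D - d u) + 1 := by
        have := hdD u; omega
      have h2 : ((D - d u) + 1) * (n + 1) ≤ (D - d (c:V)) * (n + 1) :=
        mul_le_mul_left h1 (n + 1)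
      have h3 : ((D - d u) + 1) * (n + 1) = (D - d u) * (n + 1) + (n + 1) := by ring
      have h4 : (eV u : ℕ) < n := (eV u).2
      omega
  set cap : V → ℕ := fun v => if v = z then pA + 1 else pA with hcap
  set gA : V → Bool := greedyA G cap ord with hgA
  set Afin := Finset.univ.filter (fun v => gA v = true) with hAfin
  set Bfin := Finset.univ.filter (fun v => ¬ gA v = true) with hBfin
  have hmemA : ∀ v, v ∈ Afin ↔ gA v = true := by
    intro v; simp [hAfin]
  have hmemB : ∀ v, v ∈ Bfin ↔ ¬ gA v = true := by
    intro v; simp [hBfin]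
  have heAsub : ∀ v u, u ∈ eA G cap ord v ↔ G.Adj v u ∧ ord u < ord v ∧ gA u = true := by
    intro v u; simp [eA, hgA]
  have hcap_le : ∀ v, gA v = true → (eA G cap ord v).card ≤ cap v := by
    intro v hv; exact (greedyA_iff G cap ord v).mp hv
  have hcap_gt : ∀ v, ¬ gA v = true → cap v < (eA G cap ord v).card := by
    intro v hv
    by_contra hh
    exact hv ((greedyA_iff G cap ord v).mpr (by omega))
  have hcapz : cap z = pA + 1 := by simp [hcap]
  have hcapne : ∀ v, v ≠ z → cap v = pA := by intro v hv; simp [hcap, hv]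
  have hxA : gA x = true := by
    rw [hgA, greedyA_iff]
    have he : eA G cap ord x = ∅ := by
      apply Finset.eq_empty_of_forall_notMem
      intro u hu
      rw [heAsub] at hu
      omega
    rw [he]; simp
  have hyA : gA y = true := by
    rw [hgA, greedyA_iff]
    have he : eA G cap ord y = ∅ := by
      apply Finset.eq_empty_of_forall_notMem
      intro u hu
      rw [heAsub] at hu
      obtain ⟨hadj, hlt, _⟩ := hu
      rw [hordy] at hlt
      have : ord u = ord x := by omega
      have := hinj u x this
      subst this
      exact hnadj hadj.symm
    rw [he]; simp
  have hNzcard : (G.neighborFinset z).card = Δ := by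
    rw [SimpleGraph.card_neighborFinset_eq_degree]; exact hreg z
  have hXNz : X ⊆ G.neighborFinset z := by
    intro k hk; rw [SimpleGraph.mem_neighborFinset]; exact hXN k hk
  refine ⟨Afin, Bfin, ?_, ?_, ?_, ?_⟩
  · exact Finset.disjoint_filter_filter_not Finset.univ Finset.univ _
  · exact Finset.filter_union_filter_not_eq _ Finset.univ
  · -- A side: pA-degenerate
    intro s hsub hne
    by_contra hbad
    push_neg at hbad
    have hsA : ∀ t ∈ s, gA t = true := fun t ht => (hmemA t).mp (hsub ht)
    obtain ⟨v0, hv0, hmax⟩ := Finset.exists_max_image s ord hne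
    by_cases hzs : z ∈ s
    swap
    · have hv0z : v0 ≠ z := fun h => hzs (h ▸ hv0)
      have hsubE : s.filter (fun u => G.Adj v0 u) ⊆ eA G cap ord v0 := by
        intro t ht
        rw [Finset.mem_filter] at ht
        have htv0 : t ≠ v0 := fun h => G.irrefl (h ▸ ht.2)
        rw [heAsub]
        exact ⟨ht.2, lt_of_le_of_ne (hmax t ht.1) (fun h => htv0 (hinj t v0 h)), hsA t ht.1⟩
      have h1 := Finset.card_le_card hsubE
      have h2 := hcap_le v0 (hsA v0 hv0)
      rw [hcapne v0 hv0z] at h2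
      have h3 := hbad v0 hv0
      omega
    · have hgz := hsA z hzs
      have hez_le : (eA G cap ord z).card ≤ pA + 1 := by
        have h0 := hcap_le z hgz; rwa [hcapz] at h0
      have hsz_sub : s.filter (fun u => G.Adj z u) ⊆ eA G cap ord z := by
        intro t ht
        rw [Finset.mem_filter] at ht
        have htz : t ≠ z := fun h => G.irrefl (h ▸ ht.2)
        rw [heAsub]
        exact ⟨ht.2, hordU_lt_z t htz, hsA t ht.1⟩
      have hbz := hbad z hzs
      have hEq : s.filter (fun u => G.Adj z u) = eA G cap ord z :=
        Finset.eq_of_subset_of_card_le hsz_sub (by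
          have h0 := Finset.card_le_card hsz_sub; omega)
      have hNAs : eA G cap ord z ⊆ s := by
        rw [← hEq]; exact Finset.filter_subset _ _
      have hNAcard : (eA G cap ord z).card = pA + 1 := by
        rw [hEq] at hbz; omega
      have hNAX : ∀ u ∈ eA G cap ord z, u ∈ X := by
        by_contra hw
        push_neg at hw
        obtain ⟨w, hwNA, hwX⟩ := hw
        have hwadj : G.Adj z w := ((heAsub z w).mp hwNA).1
        have hXA_sub : X.filter (fun k => gA k = true) ⊆ eA G cap ord z := by
          intro k hk
          rw [Finset.mem_filter] at hk
          have hkz : k ≠ z := fun h => hzX (h ▸ hk.1)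
          rw [heAsub]
          exact ⟨hXN k hk.1, hordU_lt_z k hkz, hk.2⟩
        have huniq : ∀ u ∈ eA G cap ord z, u ∉ X → u = w := by
          intro u hu huX
          have h1 : u ∈ G.neighborFinset z \ X := by
            rw [Finset.mem_sdiff, SimpleGraph.mem_neighborFinset]
            exact ⟨((heAsub z u).mp hu).1, huX⟩
          have h2 : w ∈ G.neighborFinset z \ X := by
            rw [Finset.mem_sdiff, SimpleGraph.mem_neighborFinset]
            exact ⟨hwadj, hwX⟩
          have h3 : (G.neighborFinset z \ X).card = 1 := by
            rw [Finset.card_sdiff_of_subset hXNz, hNzcard, hcard]; omega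
          exact Finset.card_le_one.mp (le_of_eq h3) u h1 w h2
        have hsub1 : eA G cap ord z ⊆ insert w (X.filter (fun k => gA k = true)) := by
          intro u hu
          by_cases huX : u ∈ X
          · exact Finset.mem_insert_of_mem
              (Finset.mem_filter.mpr ⟨huX, ((heAsub z u).mp hu).2.2⟩)
          · exact Finset.mem_insert.mpr (Or.inl (huniq u hu huX))
        have hXAcard_ge : pA ≤ (X.filter (fun k => gA k = true)).card := by
          have h1 := Finset.card_le_card hsub1
          have h2 := Finset.card_insert_le w (X.filter (fun k => gA k = true))
          omega
        have hXAcard_le : (X.filter (fun k => gA k = true)).card ≤ pA := by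
          have hsub2 : X.filter (fun k => gA k = true) ⊆ (eA G cap ord z).erase w := by
            intro k hk
            refine Finset.mem_erase.mpr ⟨?_, hXA_sub hk⟩
            intro hkw
            rw [hkw] at hk
            exact hwX (Finset.mem_filter.mp hk).1
          have h1 := Finset.card_le_card hsub2
          rw [Finset.card_erase_of_mem hwNA, hNAcard] at h1
          omega
        have hXB : 0 < (X.filter (fun k => ¬ gA k = true)).card := by
          have h1 := Finset.card_filter_add_card_filter_not
            (s := X) (p := fun k => gA k = true)
          rw [hcard] at h1
          omega
        obtain ⟨k, hk⟩ := Finset.card_pos.mp hXB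
        rw [Finset.mem_filter] at hk
        have hgtk := hcap_gt k hk.2
        have hkz : k ≠ z := fun h => hzX (h ▸ hk.1)
        rw [hcapne k hkz] at hgtk
        have hsub3 : eA G cap ord k ⊆ X.filter (fun u => gA u = true) := by
          intro u hu
          rw [heAsub] at hu
          have huX : u ∈ X := by
            by_contra huX
            have h1 := hXbefore k hk.1 u huX
            omega
          exact Finset.mem_filter.mpr ⟨huX, hu.2.2⟩
        have h1 := Finset.card_le_card hsub3
        omega
      have hxNA : x ∈ eA G cap ord z := by
        rw [heAsub]; exact ⟨hXN x hxX, hordU_lt_z x hxz, hxA⟩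
      have hyNA : y ∈ eA G cap ord z := by
        rw [heAsub]; exact ⟨hXN y hyX, hordU_lt_z y hyz, hyA⟩
      have hsz_ne : (s.erase z).Nonempty := ⟨x, Finset.mem_erase.mpr ⟨hxz, hNAs hxNA⟩⟩
      obtain ⟨u, hu_mem, humax⟩ := Finset.exists_max_image (s.erase z) ord hsz_ne
      have hu_s : u ∈ s := Finset.mem_of_mem_erase hu_mem
      have huz : u ≠ z := (Finset.mem_erase.mp hu_mem).1
      have hzfil : z ∈ s.filter (fun t => G.Adj u t) := by
        by_contra hzn
        have hsubu : s.filter (fun t => G.Adj u t) ⊆ eA G cap ord u := by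
          intro t ht
          rw [Finset.mem_filter] at ht
          have htz : t ≠ z := by
            intro h
            rw [h] at ht
            exact hzn (Finset.mem_filter.mpr ⟨hzs, ht.2⟩)
          have htu : t ≠ u := fun h => G.irrefl (h ▸ ht.2)
          rw [heAsub]
          refine ⟨ht.2, ?_, hsA t ht.1⟩
          exact lt_of_le_of_ne (humax t (Finset.mem_erase.mpr ⟨htz, ht.1⟩))
            (fun h => htu (hinj t u h))
        have h1 := Finset.card_le_card hsubu
        have h2 := hcap_le u (hsA u hu_s)
        rw [hcapne u huz] at h2
        have h3 := hbad u hu_s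
        omega
      have huadjz : G.Adj u z := (Finset.mem_filter.mp hzfil).2
      have huNA : u ∈ eA G cap ord z := by
        rw [heAsub]; exact ⟨huadjz.symm, hordU_lt_z u huz, hsA u hu_s⟩
      have huX : u ∈ X := hNAX u huNA
      have hsez : s.erase z ⊆ eA G cap ord z := by
        intro t ht
        have hts : t ∈ s := Finset.mem_of_mem_erase ht
        have htz : t ≠ z := (Finset.mem_erase.mp ht).1
        have htX : t ∈ X := by
          by_contra htX
          have h1 := hXbefore u huX t htX
          have h2 := humax t ht
          omega
        rw [heAsub]
        exact ⟨hXN t htX, hordU_lt_z t htz, hsA t hts⟩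
      have hsez2 : eA G cap ord z ⊆ s.erase z := by
        intro t ht
        have h1 := (heAsub z t).mp ht
        refine Finset.mem_erase.mpr ⟨?_, hNAs ht⟩
        intro h
        rw [h] at h1
        exact G.irrefl h1.1
      have hseq : s.erase z = eA G cap ord z := Finset.Subset.antisymm hsez hsez2
      have hscard : s.card = pA + 2 := by
        have h1 := Finset.card_erase_of_mem hzs
        rw [hseq, hNAcard] at h1
        have h2 : 1 ≤ s.card := Finset.card_pos.mpr ⟨z, hzs⟩
        omega
      have hxs : x ∈ s := hNAs hxNA
      have hys : y ∈ s := hNAs hyNA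
      have hfx : s.filter (fun t => G.Adj x t) ⊆ (s.erase x).erase y := by
        intro t ht
        rw [Finset.mem_filter] at ht
        have htx : t ≠ x := fun h => G.irrefl (h ▸ ht.2)
        have hty : t ≠ y := by
          intro h
          rw [h] at ht
          exact hnadj ht.2
        exact Finset.mem_erase.mpr ⟨hty, Finset.mem_erase.mpr ⟨htx, ht.1⟩⟩
      have h1 := Finset.card_le_card hfx
      have hyex2 : y ∈ s.erase x := Finset.mem_erase.mpr ⟨hxy.symm, hys⟩
      rw [Finset.card_erase_of_mem hyex2, Finset.card_erase_of_mem hxs, hscard] at h1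
      have h2 := hbad x hxs
      omega
  · -- B side: pB-degenerate
    intro s hsub hne
    by_contra hbad
    push_neg at hbad
    have hsB : ∀ t ∈ s, ¬ gA t = true := fun t ht => (hmemB t).mp (hsub ht)
    obtain ⟨v0, hv0, hmax⟩ := Finset.exists_max_image s ord hne
    by_cases hv0z : v0 = z
    · subst hv0z
      have hB := hcap_gt v0 (hsB v0 hv0)
      rw [hcapz] at hB
      have h1 : eA G cap ord v0 ⊆ G.neighborFinset v0 := by
        intro u hu; rw [heAsub] at hu
        rw [SimpleGraph.mem_neighborFinset]; exact hu.1
      have h2 : s.filter (fun u => G.Adj v0 u) ⊆ G.neighborFinset v0 := by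
        intro u hu
        rw [Finset.mem_filter] at hu
        rw [SimpleGraph.mem_neighborFinset]; exact hu.2
      have hdisj : Disjoint (s.filter (fun u => G.Adj v0 u)) (eA G cap ord v0) := by
        rw [Finset.disjoint_left]
        intro u hu1 hu2
        rw [Finset.mem_filter] at hu1
        rw [heAsub] at hu2
        exact hsB u hu1.1 hu2.2.2
      have hcup := Finset.card_le_card (Finset.union_subset h2 h1)
      rw [Finset.card_union_of_disjoint hdisj, hNzcard] at hcup
      have := hbad v0 hv0
      omega
    · have hB := hcap_gt v0 (hsB v0 hv0)
      rw [hcapne v0 hv0z] at hB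
      obtain ⟨t, hadj, hlt⟩ : ∃ t, G.Adj v0 t ∧ ord v0 < ord t := by
        by_cases hv0X : v0 ∈ X
        · exact ⟨z, (hXN v0 hv0X).symm, hordU_lt_z v0 hv0z⟩
        · exact hlater v0 hv0X hv0z
      set E := (G.neighborFinset v0).filter (fun u => ord u < ord v0) with hE
      have hEcard : E.card ≤ Δ - 1 := by
        have hsubE : E ⊆ (G.neighborFinset v0).erase t := by
          intro u hu
          rw [hE, Finset.mem_filter] at hu
          refine Finset.mem_erase.mpr ⟨?_, hu.1⟩
          intro huv; subst huv; omega
        have := Finset.card_le_card hsubE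
        rw [Finset.card_erase_of_mem ((SimpleGraph.mem_neighborFinset G v0 t).mpr hadj)] at this
        have hr := hreg v0
        rw [← SimpleGraph.card_neighborFinset_eq_degree] at hr
        omega
      have h1 : eA G cap ord v0 ⊆ E := by
        intro u hu; rw [heAsub] at hu
        rw [hE, Finset.mem_filter, SimpleGraph.mem_neighborFinset]
        exact ⟨hu.1, hu.2.1⟩
      have h2 : s.filter (fun u => G.Adj v0 u) ⊆ E := by
        intro u hu
        rw [Finset.mem_filter] at hu
        rw [hE, Finset.mem_filter, SimpleGraph.mem_neighborFinset]
        refine ⟨hu.2, ?_⟩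
        have hune : u ≠ v0 := fun h => G.irrefl (h ▸ hu.2)
        exact lt_of_le_of_ne (hmax u hu.1) (fun h => hune (hinj u v0 h))
      have hdisj : Disjoint (s.filter (fun u => G.Adj v0 u)) (eA G cap ord v0) := by
        rw [Finset.disjoint_left]
        intro u hu1 hu2
        rw [Finset.mem_filter] at hu1
        rw [heAsub] at hu2
        exact hsB u hu1.1 hu2.2.2
      have hcup := Finset.card_le_card (Finset.union_subset h2 h1)
      rw [Finset.card_union_of_disjoint hdisj] at hcup
      have := hbad v0 hv0
      omega
end

section
/- Let G be a finite connected simple graph, let v be a vertex of G, and let ℓ be the eccentricity of v (the maximum distance from v to a vertex of G). For i ≥ 0 let L_i denote the set of vertices at distance exactly i from v. Let X be a set of vertices with v ∉ X and X ⊆ L_{ℓ−1} ∪ L_ℓ (with the convention L_{−1} = ∅ if ℓ = 0). Suppose every vertex in L_ℓ \ X has a neighbor in L_{ℓ−1} \ X. Then the induced subgraph G − X obtained by deleting the vertices of X is connected. -/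
open SimpleGraph

lemma exists_adj_dist_pred {V : Type*} (G : SimpleGraph V) (hconn : G.Connected)
    (v u : V) (h : G.dist v u ≠ 0) :
    ∃ w : V, G.Adj w u ∧ G.dist v w + 1 = G.dist v u := by
  obtain ⟨p, hp⟩ := (hconn v u).exists_walk_length_eq_dist
  cases p with
  | nil => simp at h
  | cons hadj q =>
    obtain ⟨x, r, h', hc⟩ := SimpleGraph.Walk.exists_cons_eq_concat hadj q
    refine ⟨x, h', ?_⟩
    have hlen : r.length + 1 = G.dist v u := by
      rw [← hp, hc, SimpleGraph.Walk.length_concat]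
    have h1 : G.dist v x ≤ r.length := SimpleGraph.dist_le r
    have h2 : G.dist v u ≤ G.dist v x + 1 := by
      calc G.dist v u ≤ G.dist v x + G.dist x u := hconn.dist_triangle
        _ ≤ G.dist v x + 1 := by
            have := G.dist_le h'.toWalk
            simp at this; omega
    omega

/-- Let `G` be a finite connected graph, `v` a vertex of eccentricity `ℓ`, and let
`L i = {u | dist v u = i}` be the distance layers from `v`.  If `X` is a set of
vertices with `v ∉ X` and `X ⊆ L (ℓ-1) ∪ L ℓ`, and every vertex of `L ℓ \ X` has a
neighbor in `L (ℓ-1) \ X`, then `G - X` is connected. -/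
theorem delete_in_last_layers_connected {V : Type*} [Fintype V]
    (G : SimpleGraph V) (hconn : G.Connected)
    (v : V) (ℓ : ℕ)
    (hecc_le : ∀ u : V, G.dist v u ≤ ℓ)
    (hecc_eq : ∃ u : V, G.dist v u = ℓ)
    (X : Set V) (hvX : v ∉ X)
    (hX : ∀ x ∈ X, G.dist v x = ℓ - 1 ∨ G.dist v x = ℓ)
    (hnb : ∀ u : V, G.dist v u = ℓ → u ∉ X →
      ∃ w : V, G.Adj u w ∧ G.dist v w = ℓ - 1 ∧ w ∉ X) :
    (G.induce Xᶜ).Connected := by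
  have key : ∀ d : ℕ, ∀ u : V, (hu : u ∉ X) → G.dist v u = d →
      (G.induce Xᶜ).Reachable ⟨v, hvX⟩ ⟨u, hu⟩ := by
    intro d
    induction d using Nat.strong_induction_on with
    | _ d ih =>
      intro u hu hd
      rcases Nat.eq_zero_or_pos d with h0 | hpos
      · subst h0
        have : v = u := hconn.dist_eq_zero_iff.mp hd
        subst this; rfl
      rcases eq_or_ne d ℓ with heq | hne
      · -- u is in the last layer: use hnb
        obtain ⟨w, hadj, hw, hwX⟩ := hnb u (heq ▸ hd) hu
        have hlt : ℓ - 1 < d := by omega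
        have hr := ih (ℓ - 1) hlt w hwX hw
        have hadj' : (G.induce Xᶜ).Adj ⟨w, hwX⟩ ⟨u, hu⟩ := by
          simp [SimpleGraph.comap_adj, hadj.symm]
        exact hr.trans hadj'.reachable
      · -- d < ℓ: predecessor on a shortest path
        obtain ⟨w, hadj, hw⟩ := exists_adj_dist_pred G hconn v u (by omega)
        have hdlt : d < ℓ := lt_of_le_of_ne (hd ▸ hecc_le u) hne
        have hwd : G.dist v w = d - 1 := by omega
        have hwX : w ∉ X := by
          intro hmem
          rcases hX w hmem with h | h <;> omega
        have hr := ih (d - 1) (by omega) w hwX hwd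
        have hadj' : (G.induce Xᶜ).Adj ⟨w, hwX⟩ ⟨u, hu⟩ := by
          simp [SimpleGraph.comap_adj, hadj]
        exact hr.trans hadj'.reachable
  rw [SimpleGraph.connected_iff]
  refine ⟨?_, ⟨⟨v, hvX⟩⟩⟩
  · rintro ⟨x, hx⟩ ⟨y, hy⟩
    exact (key _ x hx rfl).symm.trans (key _ y hy rfl)
end
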